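/- Let b, N be positive integers and let A(b,N) = { (bNu - v)/(bNu) : u, v positive integers, 0 < v ≤ bN } \ {0}. Then A(b,N) satisfies the descending chain condition: every strictly decreasing sequence in A(b,N) is finite (equivalently, A(b,N) has no infinite strictly decreasing sequence). -/

import Mathlib

/-!
Writing `q = b N`, an element of `A(b,N)` is `(q u - v) / (q u) = 1 - v / (q u)`, which increases
with `u` and decreases with `v`. So `A(b,N)` is the monotone image of `{u > 0} × {v ≤ q}`, ordered
by `≤` on `u` and by `≥` on `v`: a product of a well-quasi-ordered set and a finite set, hence
well-quasi-ordered. Its image is then partially well-ordered, so in particular well-founded.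
-/

/-- The coefficient set A(b,N) from the canonical bundle formula. -/
def Abn (b N : ℕ) : Set ℚ :=
  {x | (∃ u v : ℕ, 0 < u ∧ 0 < v ∧ v ≤ b * N ∧
      x = ((b : ℚ) * N * u - v) / ((b : ℚ) * N * u)) ∧ x ≠ 0}

open OrderDual

theorem monotoneOn_mul_sub_div_mul {K : Type*} [Field K] [LinearOrder K] [IsStrictOrderedRing K]
    {q : K} (hq : 0 ≤ q) :
    MonotoneOn (fun p : ℕ × ℕᵒᵈ => (q * p.1 - ofDual p.2) / (q * p.1)) {p | 0 < p.1} := by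
  rintro ⟨u, v⟩ (hu : 0 < u) ⟨u', v'⟩ (hu' : 0 < u') ⟨huu', hvv'⟩
  rcases hq.eq_or_lt with rfl | hq
  · simp
  have hqu : 0 < q * u := mul_pos hq (Nat.cast_pos.2 hu)
  have hqu' : 0 < q * u' := mul_pos hq (Nat.cast_pos.2 hu')
  simp only [sub_div, div_self hqu.ne', div_self hqu'.ne', sub_le_sub_iff_left]
  exact div_le_div₀ (Nat.cast_nonneg _) (Nat.cast_le.2 hvv') hqu
    (mul_le_mul_of_nonneg_left (Nat.cast_le.2 huu') hq.le)

theorem Abn_subset_image (b N : ℕ) :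
    Abn b N ⊆ (fun p : ℕ × ℕᵒᵈ => ((b : ℚ) * N * p.1 - ofDual p.2) / ((b : ℚ) * N * p.1)) ''
      ({u | 0 < u} ×ˢ (ofDual ⁻¹' Set.Iic (b * N))) := by
  rintro x ⟨⟨u, v, hu, -, hv, rfl⟩, -⟩
  exact ⟨(u, toDual v), ⟨hu, hv⟩, rfl⟩

theorem isPWO_Abn (b N : ℕ) : (Abn b N).IsPWO := by
  refine (Set.IsPWO.image_of_monotoneOn ?_ ?_).mono (Abn_subset_image b N)
  · exact (Set.isPWO_of_wellQuasiOrderedLE _).prod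
      ((Set.finite_Iic _).preimage ofDual.injective.injOn).isPWO
  · exact (monotoneOn_mul_sub_div_mul (by positivity)).mono fun p hp => hp.1

theorem stmt1_general (b N : ℕ) :
    ¬ ∃ f : ℕ → ℚ, (∀ n, f n ∈ Abn b N) ∧ StrictAnti f := fun ⟨f, hf, hanti⟩ =>
  Set.isWF_iff_no_descending_seq.1 (isPWO_Abn b N).isWF f hanti hf

/-- A(b,N) satisfies the descending chain condition: there is no infinite
strictly decreasing sequence of elements of A(b,N). -/
theorem stmt1 (b N : ℕ) (hb : 0 < b) (hN : 0 < N) :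
    ¬ ∃ f : ℕ → ℚ, (∀ n, f n ∈ Abn b N) ∧ StrictAnti f :=
  stmt1_general b N
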